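/- Let ℓ be a prime and w ≥ 1 an integer, and set u := ⌊log_ℓ(w)⌋ (the largest integer u with ℓ^u ≤ w). Then p_ℓ(w) ≤ ℓ^(u(u+1)/2). -/
import Mathlib


/-- An `ℓ`-composition of `w` is a finitely supported sequence `(w₀, w₁, …)` of
non-negative integers with `∑ i, w_i * ℓ^i = w`; `numLCompositions ℓ w` counts them. -/
noncomputable def numLCompositions (ℓ w : ℕ) : ℕ :=
  Nat.card {f : ℕ →₀ ℕ // (f.sum fun i c => c * ℓ ^ i) = w}

private lemma sum_aux (u : ℕ) : ∑ i ∈ Finset.range u, (u - i) = u * (u + 1) / 2 := by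
  induction u with
  | zero => simp
  | succ n ih =>
    rw [Finset.sum_range_succ' (fun i => n + 1 - i)]
    have h1 : ∑ i ∈ Finset.range n, (n + 1 - (i + 1)) = ∑ i ∈ Finset.range n, (n - i) := by
      apply Finset.sum_congr rfl; intro i _; omega
    rw [h1, ih]
    have h2 : 2 ∣ n * (n + 1) := (Nat.even_mul_succ_self n).two_dvd
    have h3 : (n + 1) * (n + 1 + 1) = n * (n + 1) + 2 * (n + 1) := by ring
    omega

theorem numLCompositions_le (ℓ w : ℕ) (hℓ : ℓ.Prime) (hw : 1 ≤ w) :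
    numLCompositions ℓ w ≤ ℓ ^ (Nat.log ℓ w * (Nat.log ℓ w + 1) / 2) := by
  have hℓ1 : 1 < ℓ := hℓ.one_lt
  set u := Nat.log ℓ w with hu
  have hwlt : w < ℓ ^ (u + 1) := Nat.lt_pow_succ_log_self hℓ1 w
  -- a single term of the sum is at most w
  have hterm : ∀ f : {f : ℕ →₀ ℕ // (f.sum fun i c => c * ℓ ^ i) = w},
      ∀ i, (f : ℕ →₀ ℕ) i * ℓ ^ i ≤ w := by
    rintro ⟨f, hf⟩ i
    show f i * ℓ ^ i ≤ w
    by_cases h0 : f i = 0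
    · simp [h0]
    · have hmem : i ∈ f.support := Finsupp.mem_support_iff.mpr h0
      rw [Finsupp.sum] at hf
      calc f i * ℓ ^ i ≤ ∑ j ∈ f.support, f j * ℓ ^ j :=
            Finset.single_le_sum (f := fun j => f j * ℓ ^ j)
              (fun j _ => Nat.zero_le _) hmem
        _ = w := hf
  -- vanishing above u
  have hsupp : ∀ f : {f : ℕ →₀ ℕ // (f.sum fun i c => c * ℓ ^ i) = w},
      ∀ i, u < i → (f : ℕ →₀ ℕ) i = 0 := by
    intro f i hi
    by_contra h0
    have h1 : 1 ≤ (f : ℕ →₀ ℕ) i := Nat.one_le_iff_ne_zero.mpr h0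
    have h2 : ℓ ^ i ≤ w := le_trans (le_trans (le_of_eq (one_mul _).symm)
      (Nat.mul_le_mul_right _ h1)) (hterm f i)
    have h3 : ℓ ^ (u + 1) ≤ ℓ ^ i := Nat.pow_le_pow_right (le_of_lt hℓ1) hi
    omega
  -- the sum as a sum over range (u+1)
  have hsum : ∀ f : {f : ℕ →₀ ℕ // (f.sum fun i c => c * ℓ ^ i) = w},
      ∑ i ∈ Finset.range (u + 1), (f : ℕ →₀ ℕ) i * ℓ ^ i = w := by
    rintro ⟨f, hf⟩
    show ∑ i ∈ Finset.range (u + 1), f i * ℓ ^ i = w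
    rw [← hf]
    exact (Finsupp.sum_of_support_subset f (fun i hi => by
      rw [Finset.mem_range]
      by_contra h
      exact (Finsupp.mem_support_iff.mp hi) (hsupp ⟨f, hf⟩ i (by omega)))
      (fun i c => c * ℓ ^ i) (fun i _ => by simp)).symm
  -- bound on each coefficient
  have key : ∀ f : {f : ℕ →₀ ℕ // (f.sum fun i c => c * ℓ ^ i) = w},
      ∀ i : Fin u, (f : ℕ →₀ ℕ) (i + 1) < ℓ ^ (u - (i : ℕ)) := by
    intro f i
    have h1 := hterm f ((i : ℕ) + 1)
    have h2 : ((i : ℕ) + 1) + (u - (i : ℕ)) = u + 1 := by omega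
    have h3 : ℓ ^ ((i : ℕ) + 1) * (f : ℕ →₀ ℕ) ((i : ℕ) + 1)
        < ℓ ^ ((i : ℕ) + 1) * ℓ ^ (u - (i : ℕ)) := by
      rw [mul_comm (ℓ ^ ((i : ℕ) + 1)) ((f : ℕ →₀ ℕ) ((i : ℕ) + 1)), ← pow_add, h2]
      omega
    exact Nat.lt_of_mul_lt_mul_left h3
  let F : {f : ℕ →₀ ℕ // (f.sum fun i c => c * ℓ ^ i) = w} →
      ∀ i : Fin u, Fin (ℓ ^ (u - (i : ℕ))) :=
    fun f i => ⟨(f : ℕ →₀ ℕ) (i + 1), key f i⟩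
  have hinj : Function.Injective F := by
    intro f g hfg
    have hval : ∀ i : Fin u, (f : ℕ →₀ ℕ) ((i : ℕ) + 1) = (g : ℕ →₀ ℕ) ((i : ℕ) + 1) :=
      fun i => congrArg Fin.val (congrFun hfg i)
    have hmid : ∀ i, 1 ≤ i → i ≤ u → (f : ℕ →₀ ℕ) i = (g : ℕ →₀ ℕ) i := by
      intro i h1 h2
      have := hval ⟨i - 1, by omega⟩
      simpa [Nat.sub_add_cancel h1] using this
    have h0 : (f : ℕ →₀ ℕ) 0 = (g : ℕ →₀ ℕ) 0 := by
      have hf := hsum f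
      have hg := hsum g
      rw [Finset.sum_range_succ' (fun i => (f : ℕ →₀ ℕ) i * ℓ ^ i)] at hf
      rw [Finset.sum_range_succ' (fun i => (g : ℕ →₀ ℕ) i * ℓ ^ i)] at hg
      have heq : ∑ i ∈ Finset.range u, (f : ℕ →₀ ℕ) (i + 1) * ℓ ^ (i + 1)
          = ∑ i ∈ Finset.range u, (g : ℕ →₀ ℕ) (i + 1) * ℓ ^ (i + 1) := by
        apply Finset.sum_congr rfl
        intro i hi
        have hi' := Finset.mem_range.mp hi
        rw [hmid (i + 1) (by omega) (by omega)]
      simp only [pow_zero, mul_one] at hf hg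
      omega
    apply Subtype.ext
    apply Finsupp.ext
    intro i
    rcases Nat.lt_or_ge u i with h | h
    · rw [hsupp f i h, hsupp g i h]
    · rcases Nat.eq_zero_or_pos i with rfl | hi
      · exact h0
      · exact hmid i hi h
  have hcard := Nat.card_le_card_of_injective F hinj
  have hcard2 : Nat.card (∀ i : Fin u, Fin (ℓ ^ (u - (i : ℕ))))
      = ℓ ^ (u * (u + 1) / 2) := by
    rw [Nat.card_pi]
    simp only [Nat.card_eq_fintype_card, Fintype.card_fin]
    rw [Finset.prod_pow_eq_pow_sum]
    congr 1
    rw [Fin.sum_univ_eq_sum_range]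
    exact sum_aux u
  calc numLCompositions ℓ w
      = Nat.card {f : ℕ →₀ ℕ // (f.sum fun i c => c * ℓ ^ i) = w} := rfl
    _ ≤ Nat.card (∀ i : Fin u, Fin (ℓ ^ (u - (i : ℕ)))) := hcard
    _ = ℓ ^ (u * (u + 1) / 2) := hcard2
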